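/- arXiv:2306.03928 — 4 statements merged into one kernel-verified Lean document; each statement's English description precedes it below -/
import Mathlib

section
/- Let α̃ be the ⌈m/2⌉-th smallest element of A₀. Then either (i) for every α' ∈ A₀ with α' ≥ α̃, h(α') = y holds if and only if (y ∈ C(α') and h(α̃) = y), or (ii) for every α' ∈ A₀ with α' ≤ α̃, h(α') ≠ y. Moreover, the set {α' ∈ A₀ : α' ≥ α̃} has ⌊m/2⌋ + 1 ≥ ⌈m/2⌉ elements and the set {α' ∈ A₀ : α' ≤ α̃} has ⌈m/2⌉ elements, so a single query of h at the median determines the correctness indicator 1{h(α') = y} for at least ⌈m/2⌉ of the m parameters, leaving at most ⌊m/2⌋ undetermined. -/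
/-- Querying the strict expert at the median `αm` (the `⌈m/2⌉`-th smallest element of a
finite set `A₀` of `m` parameters) determines, under counterfactual monotonicity, the
correctness indicator for at least `⌈m/2⌉` of the parameters: either the expert succeeded
at `αm`, which determines correctness for all `α' ≥ αm` in `A₀` (exactly `⌊m/2⌋ + 1 ≥ ⌈m/2⌉`
parameters), or she failed at `αm`, which determines failure for all `α' ≤ αm` in `A₀`
(exactly `⌈m/2⌉` parameters). -/
theorem median_query_determines_half {A Y : Type*} [LinearOrder A] (y : Y) (C : A → Set Y)
    (hC : ∀ α α' : A, α ≤ α' → C α' ⊆ C α)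
    (h : A → Y) (hh : ∀ α : A, h α ∈ C α)
    (hcm : ∀ α α' : A, α ≤ α' → y ∈ C α' → h α = y → h α' = y)
    (m : ℕ) (hm : 1 ≤ m) (A₀ : Finset A) (hcard : A₀.card = m)
    (αm : A) (hαm : αm ∈ A₀)
    (hmed : (A₀.filter (fun a => a ≤ αm)).card = (m + 1) / 2) :
    ((∀ α' ∈ A₀, αm ≤ α' → (h α' = y ↔ (y ∈ C α' ∧ h αm = y))) ∨
      (∀ α' ∈ A₀, α' ≤ αm → h α' ≠ y)) ∧
    (A₀.filter (fun a => αm ≤ a)).card = m / 2 + 1 ∧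
    (m + 1) / 2 ≤ m / 2 + 1 ∧
    (A₀.filter (fun a => a ≤ αm)).card = (m + 1) / 2 := by
  have key : (∀ α' ∈ A₀, αm ≤ α' → (h α' = y ↔ (y ∈ C α' ∧ h αm = y))) ∨
      (∀ α' ∈ A₀, α' ≤ αm → h α' ≠ y) := by
    by_cases hy : y ∈ C αm
    · by_cases he : h αm = y
      · left; intro α' _ hle
        constructor
        · intro h1; exact ⟨h1 ▸ hh α', he⟩
        · rintro ⟨hy', _⟩; exact hcm αm α' hle hy' he
      · right; intro α' _ hle h1
        exact he (hcm α' αm hle hy h1)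
    · left; intro α' _ hle
      constructor
      · intro h1; exact absurd (h1 ▸ hh α') (fun hy' => hy (hC αm α' hle hy'))
      · rintro ⟨hy', _⟩; exact absurd (hC αm α' hle hy') hy
  refine ⟨key, ?_, by omega, hmed⟩
  have h1 : (A₀.filter (fun a => αm < a)).card = m - (m + 1) / 2 := by
    have := Finset.card_filter_add_card_filter_not (s := A₀)
      (p := fun a => a ≤ αm)
    simp only [not_le] at this
    omega
  have h2 : A₀.filter (fun a => αm ≤ a) = insert αm (A₀.filter (fun a => αm < a)) := by
    ext a
    simp only [Finset.mem_insert, Finset.mem_filter]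
    constructor
    · rintro ⟨ha, hle⟩
      rcases lt_or_eq_of_le hle with hlt | heq
      · exact Or.inr ⟨ha, hlt⟩
      · exact Or.inl heq.symm
    · rintro (rfl | ⟨ha, hlt⟩)
      · exact ⟨hαm, le_refl _⟩
      · exact ⟨ha, le_of_lt hlt⟩
  rw [h2, Finset.card_insert_of_notMem (by simp), h1]
  omega
end

section
/- Let A be a finite set of arms, t ≥ 1 an integer, and T ≥ 1 and L ≥ 1 real numbers. Suppose n : A → ℕ and ν : A → ℕ satisfy Σ_{α ∈ A} n(α) = t and ν(α) ≥ t/L for all α ∈ A, and Δ : A → ℝ satisfies 0 ≤ Δ(α) ≤ 4·√(2·log T / ν(α)) for all α ∈ A. Then Σ_{α ∈ A} n(α)·Δ(α) ≤ 4·√(2·L·t·log T). (With L = ⌈log₂ m⌉ this yields the clean-event regret bound O(√(t·log m·log T)) of counterfactual successive elimination in Theorem 1.) -/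
open Finset in
/-- Clean-event regret bound of counterfactual successive elimination. If each arm `α` of a
finite arm set `A` has been pulled `n α` times (with `∑ α, n α = t`), has at least `t / L`
observed or counterfactually inferred rewards `ν α`, and has suboptimality gap
`0 ≤ Δ α ≤ 4·√(2·log T / ν α)`, then the total regret `∑ α, n α · Δ α` is at most
`4·√(2·L·t·log T)`. With `L = ⌈log₂ m⌉` this gives the `O(√(t·log m·log T))` bound of
Theorem 1. -/
theorem regret_bound_clean_event {A : Type*} [Fintype A]
    (t : ℕ) (ht : 1 ≤ t) (T L : ℝ) (hT : 1 ≤ T) (hL : 1 ≤ L)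
    (n ν : A → ℕ) (hn : ∑ α, n α = t)
    (hν : ∀ α : A, (t : ℝ) / L ≤ (ν α : ℝ))
    (Δ : A → ℝ) (hΔ0 : ∀ α : A, 0 ≤ Δ α)
    (hΔ : ∀ α : A, Δ α ≤ 4 * Real.sqrt (2 * Real.log T / (ν α : ℝ))) :
    ∑ α, (n α : ℝ) * Δ α ≤ 4 * Real.sqrt (2 * L * (t : ℝ) * Real.log T) := by
  have ht' : (0 : ℝ) < t := by exact_mod_cast ht
  have hL0 : (0 : ℝ) < L := lt_of_lt_of_le one_pos hL
  have hlog : 0 ≤ Real.log T := Real.log_nonneg hT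
  have key : ∀ α : A, Δ α ≤ 4 * Real.sqrt (2 * L * Real.log T / t) := by
    intro α
    refine (hΔ α).trans ?_
    have hνpos : (0 : ℝ) < ν α := lt_of_lt_of_le (div_pos ht' hL0) (hν α)
    have h1 : 2 * Real.log T / (ν α : ℝ) ≤ 2 * L * Real.log T / t := by
      rw [div_le_div_iff₀ hνpos ht']
      have h2 : (t : ℝ) ≤ ν α * L := (div_le_iff₀ hL0).mp (hν α)
      nlinarith [mul_le_mul_of_nonneg_left h2 hlog]
    exact mul_le_mul_of_nonneg_left (Real.sqrt_le_sqrt h1) (by norm_num)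
  calc ∑ α, (n α : ℝ) * Δ α
      ≤ ∑ α, (n α : ℝ) * (4 * Real.sqrt (2 * L * Real.log T / t)) := by
        exact Finset.sum_le_sum fun α _ =>
          mul_le_mul_of_nonneg_left (key α) (Nat.cast_nonneg _)
    _ = (t : ℝ) * (4 * Real.sqrt (2 * L * Real.log T / t)) := by
        rw [← Finset.sum_mul]
        congr 1
        exact_mod_cast congrArg (Nat.cast : ℕ → ℝ) hn
    _ = 4 * ((t : ℝ) * Real.sqrt (2 * L * Real.log T / t)) := by ring
    _ = 4 * Real.sqrt (2 * L * (t : ℝ) * Real.log T) := by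
        rw [← Real.sqrt_sq ht'.le, ← Real.sqrt_mul (sq_nonneg _)]
        congr 2
        field_simp
        rw [Real.sq_sqrt (sq_nonneg (t : ℝ))]
        ring
end

section
/- Let Z₁, …, Z_{m+1} be independent and identically distributed real-valued random variables, let α satisfy 1/(m+1) ≤ α < 1, set k = ⌈(m+1)(1−α)⌉ (so 1 ≤ k ≤ m), and let q̂ denote the k-th smallest value among Z₁, …, Z_m. Then P(Z_{m+1} ≤ q̂) ≥ 1 − α. -/
open MeasureTheory ProbabilityTheory
open scoped ENNReal



open List

lemma sorted_le_getElem {s : List ℝ} (hs : s.Pairwise (· ≤ ·)) {i j : ℕ} (hij : i ≤ j)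
    (hj : j < s.length) : s[i]'(lt_of_le_of_lt hij hj) ≤ s[j] := by
  rcases eq_or_lt_of_le hij with rfl | h
  · exact le_refl _
  · exact List.pairwise_iff_getElem.1 hs i j _ _ h

-- count of elements < z in a sorted list, when z ≤ s[j], is ≤ j
lemma countP_lt_le_of_le_get {s : List ℝ} (hs : s.Pairwise (· ≤ ·)) {j : ℕ} (hj : j < s.length)
    {z : ℝ} (hz : z ≤ s[j]) :
    s.countP (fun a => decide (a < z)) ≤ j := by
  have h := List.take_append_drop j s
  have hdrop : (s.drop j).countP (fun a => decide (a < z)) = 0 := by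
    refine List.countP_eq_zero.2 ?_
    intro a ha
    obtain ⟨i, hil, hi⟩ := List.mem_iff_getElem.1 ha
    have hil' : j + i < s.length := by
      have := hil; rw [List.length_drop] at this; omega
    have h2 : (s.drop j)[i] = s[j + i] := List.getElem_drop ..
    have h3 : s[j] ≤ s[j+i] := sorted_le_getElem hs (Nat.le_add_right _ _) hil'
    simp only [decide_eq_true_eq]
    rw [← hi, h2]
    exact not_lt.2 (le_trans hz h3)
  have htake : (s.take j).countP (fun a => decide (a < z)) ≤ j :=
    le_trans List.countP_le_length (by rw [List.length_take]; omega)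
  calc s.countP (fun a => decide (a < z))
      = (s.take j).countP (fun a => decide (a < z)) +
        (s.drop j).countP (fun a => decide (a < z)) := by
        conv_lhs => rw [← h]
        rw [List.countP_append]
    _ ≤ j := by omega

lemma le_get_of_countP_lt_le {s : List ℝ} (hs : s.Pairwise (· ≤ ·)) {j : ℕ} (hj : j < s.length)
    {z : ℝ} (h : s.countP (fun a => decide (a < z)) ≤ j) :
    z ≤ s[j] := by
  by_contra hlt
  push_neg at hlt
  have h4 : (s.take (j+1)).length = j + 1 := by rw [List.length_take]; omega
  have h1 : (s.take (j+1)).countP (fun a => decide (a < z)) = (s.take (j+1)).length := by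
    refine List.countP_eq_length.2 ?_
    intro a ha
    obtain ⟨i, hil, hi⟩ := List.mem_iff_getElem.1 ha
    have hil' : i < j + 1 := by omega
    have h2 : (s.take (j+1))[i] = s[i]'(by omega) := List.getElem_take ..
    have h3 : s[i]'(by omega) ≤ s[j] := sorted_le_getElem hs (by omega) hj
    simp only [decide_eq_true_eq]
    rw [← hi, h2]
    exact lt_of_le_of_lt h3 hlt
  have h5 := List.Sublist.countP_le (p := fun a => decide (a < z)) (List.take_sublist (j+1) s)
  omega

-- at least j+1 elements of a sorted list are ≤ s[j]
lemma le_countP_le_get {s : List ℝ} (hs : s.Pairwise (· ≤ ·)) {j : ℕ} (hj : j < s.length) :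
    j + 1 ≤ s.countP (fun a => decide (a ≤ s[j])) := by
  have h4 : (s.take (j+1)).length = j + 1 := by rw [List.length_take]; omega
  have h1 : (s.take (j+1)).countP (fun a => decide (a ≤ s[j])) = (s.take (j+1)).length := by
    refine List.countP_eq_length.2 ?_
    intro a ha
    obtain ⟨i, hil, hi⟩ := List.mem_iff_getElem.1 ha
    have h2 : (s.take (j+1))[i] = s[i]'(by omega) := List.getElem_take ..
    have h3 : s[i]'(by omega) ≤ s[j] := sorted_le_getElem hs (by omega) hj
    simp only [decide_eq_true_eq]
    rw [← hi, h2]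
    exact h3
  have h5 := List.Sublist.countP_le (p := fun a => decide (a ≤ s[j])) (List.take_sublist (j+1) s)
  omega


section Aux

/-- number of coordinates with value `< z` -/
noncomputable def cnt {n : ℕ} (x : Fin n → ℝ) (z : ℝ) : ℕ :=
  (Finset.univ.filter (fun i => x i < z)).card

lemma card_filter_eq_countP {n : ℕ} (x : Fin n → ℝ) (p : ℝ → Bool) :
    (Finset.univ.filter (fun i => p (x i) = true)).card = (List.ofFn x).countP p := by
  induction n with
  | zero => simp
  | succ n ih =>
    rw [List.ofFn_succ, List.countP_cons, ← ih (fun i => x i.succ)]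
    rw [Fin.card_filter_univ_succ' (fun i => p (x i) = true)]
    by_cases h : p (x 0) = true <;> simp [h, add_comm]

lemma cnt_eq_countP {n : ℕ} (x : Fin n → ℝ) (z : ℝ) :
    cnt x z = (List.ofFn x).countP (fun a => decide (a < z)) := by
  rw [← card_filter_eq_countP x (fun a => decide (a < z)), cnt]
  congr 1
  apply Finset.filter_congr
  intro i _
  simp

lemma cnt_mono {n : ℕ} (x : Fin n → ℝ) {z z' : ℝ} (h : z ≤ z') : cnt x z ≤ cnt x z' := by
  apply Finset.card_le_card
  intro i hi
  simp only [Finset.mem_filter] at *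
  exact ⟨hi.1, lt_of_lt_of_le hi.2 h⟩

lemma cnt_comp_equiv {n : ℕ} (x : Fin n → ℝ) (e : Fin n ≃ Fin n) (z : ℝ) :
    cnt (fun i => x (e i)) z = cnt x z := by
  unfold cnt
  apply Finset.card_equiv e
  intro i
  simp

lemma cnt_castSucc {n : ℕ} (x : Fin (n + 1) → ℝ) {z : ℝ} (h : ¬ x (Fin.last n) < z) :
    cnt x z = cnt (fun i : Fin n => x i.castSucc) z := by
  rw [cnt_eq_countP, cnt_eq_countP, List.ofFn_succ']
  rw [List.concat_eq_append, List.countP_append]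
  simp [h]

lemma claimA {n : ℕ} (x : Fin n → ℝ) (k : ℕ) (hk1 : 1 ≤ k) (hkn : k ≤ n) :
    k ≤ (Finset.univ.filter (fun j => cnt x (x j) ≤ k - 1)).card := by
  set s := (List.ofFn x).insertionSort (· ≤ ·) with hs
  have hsl : s.length = n := by rw [hs, List.length_insertionSort, List.length_ofFn]
  have hsorted : s.Pairwise (· ≤ ·) := List.pairwise_insertionSort _ _
  have hperm : s ~ List.ofFn x := List.perm_insertionSort _ _
  have hkn' : k - 1 < s.length := by omega
  set t := s[k-1] with ht
  have h1 : cnt x t ≤ k - 1 := by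
    rw [cnt_eq_countP, ← hperm.countP_eq]
    exact countP_lt_le_of_le_get hsorted hkn' (le_refl t)
  have h2 : k ≤ (Finset.univ.filter (fun j => x j ≤ t)).card := by
    have hb : (Finset.univ.filter (fun j => x j ≤ t)).card
        = (List.ofFn x).countP (fun a => decide (a ≤ t)) := by
      rw [← card_filter_eq_countP x (fun a => decide (a ≤ t))]
      congr 1
      apply Finset.filter_congr
      intro i _
      simp
    rw [hb, ← hperm.countP_eq]
    have := le_countP_le_get hsorted hkn'
    rw [← ht] at this
    omega
  refine le_trans h2 (Finset.card_le_card ?_)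
  intro j hj
  simp only [Finset.mem_filter, Finset.mem_univ, true_and] at *
  exact le_trans (cnt_mono x hj) h1

end Aux

/-- Marginal coverage guarantee of the split conformal predictor. Let `Z₁, …, Z_{m+1}` be
i.i.d. real random variables (`Z i.castSucc` for `i : Fin m` are the calibration scores and
`Z (Fin.last m)` is the test score), let `1/(m+1) ≤ α < 1`, let `k = ⌈(m+1)(1−α)⌉` (so
`1 ≤ k ≤ m`), and let `q̂ ω` be the `k`-th smallest of the calibration scores. Then
`P(Z_{m+1} ≤ q̂) ≥ 1 − α`. -/
theorem conformal_coverage_lower_bound {Ω : Type*} [MeasureSpace Ω]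
    [IsProbabilityMeasure (ℙ : Measure Ω)]
    (m : ℕ) (hm : 1 ≤ m) (Z : Fin (m + 1) → Ω → ℝ)
    (hmeas : ∀ i, Measurable (Z i))
    (hindep : iIndepFun Z ℙ)
    (hident : ∀ i j, IdentDistrib (Z i) (Z j) ℙ ℙ)
    (α : ℝ) (hα : 1 / ((m : ℝ) + 1) ≤ α) (hα' : α < 1) :
    ENNReal.ofReal (1 - α) ≤
      ℙ {ω | Z (Fin.last m) ω ≤
        ((List.ofFn fun i : Fin m => Z i.castSucc ω).insertionSort (· ≤ ·)).getD
          ((⌈((m : ℝ) + 1) * (1 - α)⌉).toNat - 1) 0} := by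
  classical
  set k : ℕ := (⌈((m : ℝ) + 1) * (1 - α)⌉).toNat with hk
  have hmpos : (0:ℝ) < (m:ℝ) + 1 := by positivity
  have hαpos : (0:ℝ) < 1 - α := by linarith
  have hceil_pos : 0 < ⌈((m : ℝ) + 1) * (1 - α)⌉ := Int.ceil_pos.2 (by positivity)
  have hk1 : 1 ≤ k := by rw [hk]; omega
  have hkm : k ≤ m := by
    have h0 : 1 - α ≤ 1 - 1/((m:ℝ)+1) := by linarith
    have h1 : ((m : ℝ) + 1) * (1 - α) ≤ m := by
      calc ((m:ℝ)+1) * (1-α) ≤ ((m:ℝ)+1) * (1 - 1/((m:ℝ)+1)) :=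
            mul_le_mul_of_nonneg_left h0 (le_of_lt hmpos)
        _ = m := by field_simp; ring
    have h2 : ⌈((m : ℝ) + 1) * (1 - α)⌉ ≤ (m : ℤ) := Int.ceil_le.2 (by exact_mod_cast h1)
    rw [hk]; omega
  have hkreal : ((m : ℝ) + 1) * (1 - α) ≤ (k : ℝ) := by
    have h1 := Int.le_ceil (((m : ℝ) + 1) * (1 - α))
    have h2 : ((k : ℤ) : ℝ) = ((⌈((m : ℝ) + 1) * (1 - α)⌉ : ℤ) : ℝ) := by
      rw [hk, Int.toNat_of_nonneg (le_of_lt hceil_pos)]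
    push_cast at h2 ⊢
    linarith
  -- the random vector and its law
  set J : Ω → (Fin (m+1) → ℝ) := fun ω i => Z i ω with hJdef
  have hJ : Measurable J := measurable_pi_lambda _ hmeas
  set μ0 : Measure ℝ := Measure.map (Z 0) ℙ with hμ0
  have _i : IsProbabilityMeasure μ0 := Measure.isProbabilityMeasure_map (hmeas 0).aemeasurable
  have hmapeq : ∀ i, Measure.map (Z i) ℙ = μ0 := fun i => (hident i 0).map_eq
  have hjoint : Measure.pi (fun _ : Fin (m+1) => μ0) = Measure.map J ℙ := by
    refine Measure.pi_eq fun s hs => ?_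
    rw [Measure.map_apply hJ (MeasurableSet.univ_pi hs)]
    have hpre : J ⁻¹' Set.pi Set.univ s = ⋂ i ∈ Finset.univ, Z i ⁻¹' s i := by
      ext ω; simp [Set.mem_pi, hJdef]
    rw [hpre, hindep.measure_inter_preimage_eq_mul Finset.univ (fun i _ => hs i)]
    exact Finset.prod_congr rfl fun i _ => by
      rw [← hmapeq i, Measure.map_apply (hmeas i) (hs i)]
  -- the events
  set B : Fin (m+1) → Set (Fin (m+1) → ℝ) := fun j => {x | cnt x (x j) ≤ k - 1} with hB
  have hcntmeas : ∀ j : Fin (m+1), Measurable (fun x : Fin (m+1) → ℝ => cnt x (x j)) := by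
    intro j
    have heq : (fun x : Fin (m+1) → ℝ => cnt x (x j))
        = fun x => ∑ i : Fin (m+1), if x i < x j then 1 else 0 := by
      funext x; rw [cnt, Finset.card_filter]
    rw [heq]
    exact Finset.measurable_sum _ fun i _ => Measurable.ite
      (measurableSet_lt (measurable_pi_apply i) (measurable_pi_apply j))
      measurable_const measurable_const
  have hBmeas : ∀ j, MeasurableSet (B j) :=
    fun j => (hcntmeas j) (show MeasurableSet {a : ℕ | a ≤ k - 1} from (Set.to_countable _).measurableSet)
  -- permutation invariance
  have hswap : ∀ j : Fin (m+1),
      Measure.pi (fun _ : Fin (m+1) => μ0) (B (Fin.last m))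
        = Measure.pi (fun _ : Fin (m+1) => μ0) (B j) := by
    intro j
    set e : Fin (m+1) ≃ Fin (m+1) := Equiv.swap j (Fin.last m) with he
    have mp := (MeasureTheory.measurePreserving_piCongrLeft
      (fun _ : Fin (m+1) => μ0) e).symm
    have hg : ⇑(MeasurableEquiv.piCongrLeft (fun _ : Fin (m+1) => ℝ) e).symm
        = fun (x : Fin (m+1) → ℝ) a => x (e a) := by
      funext x a
      exact Equiv.piCongrLeft_symm_apply (fun _ => ℝ) e x a
    have hpre : (MeasurableEquiv.piCongrLeft (fun _ : Fin (m+1) => ℝ) e).symm ⁻¹' (B j)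
        = B (Fin.last m) := by
      ext x
      simp only [Set.mem_preimage, hg, hB, Set.mem_setOf_eq]
      have h1 : cnt (fun a => x (e a)) (x (e j)) = cnt x (x (e j)) :=
        cnt_comp_equiv x e (x (e j))
      have h2 : e j = Fin.last m := Equiv.swap_apply_left _ _
      rw [h1, h2]
    calc Measure.pi (fun _ : Fin (m+1) => μ0) (B (Fin.last m))
        = Measure.pi (fun _ : Fin (m+1) => μ0)
            ((MeasurableEquiv.piCongrLeft (fun _ : Fin (m+1) => ℝ) e).symm ⁻¹' (B j)) := by
          rw [hpre]
      _ = Measure.pi (fun _ : Fin (m+1) => μ0) (B j) := mp.measure_preimage (hBmeas j).nullMeasurableSet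
  have hA : ∀ j, ℙ (J ⁻¹' B j) = Measure.pi (fun _ : Fin (m+1) => μ0) (B j) :=
    fun j => by rw [hjoint, Measure.map_apply hJ (hBmeas j)]
  -- averaging
  have hsum : ∑ j : Fin (m+1), ℙ (J ⁻¹' B j) = ((m:ℝ≥0∞) + 1) * ℙ (J ⁻¹' B (Fin.last m)) := by
    have : ∀ j : Fin (m+1), ℙ (J ⁻¹' B j) = ℙ (J ⁻¹' B (Fin.last m)) := fun j => by
      rw [hA j, ← hswap j, ← hA]
    rw [Finset.sum_congr rfl fun j _ => this j, Finset.sum_const, Finset.card_univ,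
      Fintype.card_fin, nsmul_eq_mul]
    push_cast
    ring
  have hksum : (k : ℝ≥0∞) ≤ ∑ j : Fin (m+1), ℙ (J ⁻¹' B j) := by
    have hci : ∀ ω : Ω, (k : ℝ≥0∞)
        ≤ ∑ j : Fin (m+1), (J ⁻¹' B j).indicator (fun _ => (1:ℝ≥0∞)) ω := by
      intro ω
      have hcard := claimA (fun i => Z i ω) k hk1 (by omega)
      have heq : ∑ j : Fin (m+1), (J ⁻¹' B j).indicator (fun _ => (1:ℝ≥0∞)) ω
          = ((Finset.univ.filter
              (fun j : Fin (m+1) => cnt (fun i => Z i ω) (Z j ω) ≤ k - 1)).card : ℝ≥0∞) := by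
        rw [Finset.card_filter]
        push_cast
        refine Finset.sum_congr rfl fun j _ => ?_
        by_cases hj : cnt (fun i => Z i ω) (Z j ω) ≤ k - 1
        · simp [Set.indicator_of_mem, hj, hB, hJdef, Set.mem_preimage, Set.mem_setOf_eq]
        · simp [Set.indicator_of_notMem, hj, hB, hJdef, Set.mem_preimage, Set.mem_setOf_eq]
      rw [heq]
      exact_mod_cast hcard
    calc (k : ℝ≥0∞) = ∫⁻ _, (k:ℝ≥0∞) ∂ℙ := by simp
      _ ≤ ∫⁻ ω, ∑ j : Fin (m+1), (J ⁻¹' B j).indicator (fun _ => (1:ℝ≥0∞)) ω ∂ℙ :=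
          lintegral_mono hci
      _ = ∑ j : Fin (m+1), ∫⁻ ω, (J ⁻¹' B j).indicator (fun _ => (1:ℝ≥0∞)) ω ∂ℙ :=
          lintegral_finset_sum _ fun j _ =>
            measurable_const.indicator (hJ (hBmeas j))
      _ = ∑ j : Fin (m+1), ℙ (J ⁻¹' B j) :=
          Finset.sum_congr rfl fun j _ => lintegral_indicator_one (hJ (hBmeas j))
  have hmain : ENNReal.ofReal (1 - α) ≤ ℙ (J ⁻¹' B (Fin.last m)) := by
    rw [← ENNReal.mul_le_mul_iff_left (c := (m:ℝ≥0∞) + 1) (by simp) (by simp)]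
    calc ENNReal.ofReal (1-α) * ((m:ℝ≥0∞)+1)
        = ENNReal.ofReal ((1-α) * ((m:ℝ)+1)) := by
          rw [ENNReal.ofReal_mul (le_of_lt hαpos)]
          congr 1
          rw [ENNReal.ofReal_add (by positivity) zero_le_one, ENNReal.ofReal_natCast,
            ENNReal.ofReal_one]
      _ ≤ (k : ℝ≥0∞) := by
          rw [← ENNReal.ofReal_natCast k]
          exact ENNReal.ofReal_le_ofReal (by linarith)
      _ ≤ ∑ j : Fin (m+1), ℙ (J ⁻¹' B j) := hksum
      _ = ((m:ℝ≥0∞)+1) * ℙ (J ⁻¹' B (Fin.last m)) := hsum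
      _ = ℙ (J ⁻¹' B (Fin.last m)) * ((m:ℝ≥0∞)+1) := mul_comm _ _
  -- identify the event
  have hset : {ω | Z (Fin.last m) ω ≤
      ((List.ofFn fun i : Fin m => Z i.castSucc ω).insertionSort (· ≤ ·)).getD (k - 1) 0}
      = J ⁻¹' B (Fin.last m) := by
    ext ω
    have hsl : ((List.ofFn fun i : Fin m => Z i.castSucc ω).insertionSort (· ≤ ·)).length = m := by
      rw [List.length_insertionSort, List.length_ofFn]
    have hkl : k - 1 < ((List.ofFn fun i : Fin m => Z i.castSucc ω).insertionSort (· ≤ ·)).length := by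
      omega
    have hsorted : ((List.ofFn fun i : Fin m => Z i.castSucc ω).insertionSort (· ≤ ·)).Pairwise (· ≤ ·) :=
      List.pairwise_insertionSort _ _
    have hperm : ((List.ofFn fun i : Fin m => Z i.castSucc ω).insertionSort (· ≤ ·))
        ~ List.ofFn fun i : Fin m => Z i.castSucc ω := List.perm_insertionSort _ _
    have hcnt_eq : cnt (fun i : Fin (m+1) => Z i ω) (Z (Fin.last m) ω)
        = ((List.ofFn fun i : Fin m => Z i.castSucc ω).insertionSort (· ≤ ·)).countP
            (fun a => decide (a < Z (Fin.last m) ω)) := by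
      rw [cnt_castSucc (fun i : Fin (m+1) => Z i ω) (lt_irrefl _), cnt_eq_countP,
        hperm.countP_eq]
    simp only [Set.mem_setOf_eq, Set.mem_preimage, hB, hJdef]
    rw [List.getD_eq_getElem _ _ hkl]
    constructor
    · intro h
      rw [hcnt_eq]
      exact countP_lt_le_of_le_get hsorted hkl h
    · intro h
      rw [hcnt_eq] at h
      exact le_get_of_countP_lt_le hsorted hkl h
  rw [hset]
  exact hmain
end

section
/- Let Z₁, …, Z_{m+1} be independent and identically distributed real-valued random variables such that P(Zᵢ = Zⱼ) = 0 for all i ≠ j, let α satisfy 1/(m+1) ≤ α < 1, set k = ⌈(m+1)(1−α)⌉ (so 1 ≤ k ≤ m), and let q̂ denote the k-th smallest value among Z₁, …, Z_m. Then P(Z_{m+1} ≤ q̂) ≤ 1 − α + 1/(m+1). -/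
open MeasureTheory ProbabilityTheory
open Finset in
theorem card_filter_eq_countP_ofFn (m : ℕ) (v : Fin m → ℝ) (x : ℝ) :
    ((univ.filter fun i => v i ≤ x).card : ℕ) = (List.ofFn v).countP (fun a => a ≤ x) := by
  rw [List.ofFn_eq_map, List.countP_map]
  rw [show (univ.filter fun i => v i ≤ x).card
      = Multiset.countP (fun i => decide (v i ≤ x)) univ.val from ?_]
  · rw [show (univ : Finset (Fin m)).val = ↑(List.finRange m) from rfl,
      Multiset.coe_countP]
    congr 1; ext b; simp [Function.comp]
  · rw [Multiset.countP_eq_card_filter]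
    simp [Finset.card, Finset.filter]

open Finset in
theorem sorted_count_le (m : ℕ) (v : Fin m → ℝ) (x : ℝ) (hne : ∀ i, v i ≠ x)
    (k : ℕ) (hk1 : 1 ≤ k) (hkm : k ≤ m)
    (hx : x ≤ ((List.ofFn v).insertionSort (· ≤ ·)).getD (k - 1) 0) :
    (univ.filter fun i => v i ≤ x).card ≤ k - 1 := by
  set l := (List.ofFn v).insertionSort (· ≤ ·) with hl
  have hperm : l.Perm (List.ofFn v) := List.perm_insertionSort _ _
  have hlen : l.length = m := by rw [hperm.length_eq, List.length_ofFn]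
  have hsorted : l.Pairwise (· ≤ ·) := List.pairwise_insertionSort _ _
  have hidx : k - 1 < l.length := by omega
  have hget : l.getD (k - 1) 0 = l.get ⟨k - 1, hidx⟩ := List.getD_eq_getElem l 0 hidx
  rw [card_filter_eq_countP_ofFn, ← hperm.countP_eq]
  have hsplit : l = l.take (k - 1) ++ l.drop (k - 1) := (List.take_append_drop _ _).symm
  rw [hsplit, List.countP_append]
  have h1 : (l.take (k - 1)).countP (fun a => a ≤ x) ≤ k - 1 := by
    calc (l.take (k - 1)).countP (fun a => a ≤ x) ≤ (l.take (k - 1)).length :=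
        List.countP_le_length
    _ ≤ k - 1 := by rw [List.length_take]; omega
  have h2 : (l.drop (k - 1)).countP (fun a => a ≤ x) = 0 := by
    rw [List.countP_eq_zero]
    intro a ha
    have hmem : a ∈ l := List.mem_of_mem_drop ha
    have hanex : a ≠ x := by
      have : a ∈ List.ofFn v := hperm.mem_iff.mp hmem
      obtain ⟨i, hi⟩ := List.mem_ofFn.mp this
      exact hi ▸ hne i
    have hdrop : l.drop (k - 1) = l.get ⟨k - 1, hidx⟩ :: l.drop k := by
      rw [List.drop_eq_getElem_cons hidx, show k - 1 + 1 = k by omega, List.get_eq_getElem]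
    have hsd : (l.drop (k - 1)).Pairwise (· ≤ ·) :=
      hsorted.sublist (List.drop_sublist _ _)
    rw [hdrop, List.pairwise_cons] at hsd
    have hga : l.get ⟨k - 1, hidx⟩ ≤ a := by
      rw [hdrop] at ha
      rcases List.mem_cons.mp ha with h | h
      · exact h.ge
      · exact hsd.1 a h
    have : x ≤ a := le_trans (hget ▸ hx) hga
    simp only [decide_eq_true_eq]
    intro hax
    exact hanex (le_antisymm hax this)
  omega
open MeasureTheory ProbabilityTheory

theorem iid_map_pi {Ω : Type*} [MeasureSpace Ω] [IsProbabilityMeasure (ℙ : Measure Ω)]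
    (n : ℕ) (Z : Fin n → Ω → ℝ) (hmeas : ∀ i, Measurable (Z i))
    (hindep : iIndepFun Z ℙ)
    (hident : ∀ i j, IdentDistrib (Z i) (Z j) ℙ ℙ) (j0 : Fin n)
    (σ : Equiv.Perm (Fin n)) :
    Measure.map (fun ω i => Z (σ i) ω) ℙ = Measure.pi (fun _ => (Measure.map (Z j0) ℙ)) := by
  haveI : ∀ i : Fin n, IsProbabilityMeasure ((fun _ => (Measure.map (Z j0) ℙ)) i) :=
    fun _ => Measure.isProbabilityMeasure_map (hmeas j0).aemeasurable
  have hvec : Measurable (fun ω i => Z (σ i) ω) :=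
    measurable_pi_lambda _ fun i => hmeas (σ i)
  refine (Measure.pi_eq fun s hs => ?_).symm
  rw [Measure.map_apply hvec (MeasurableSet.univ_pi hs)]
  have hpre : (fun ω i => Z (σ i) ω) ⁻¹' Set.pi Set.univ s
      = ⋂ i ∈ Finset.univ, Z i ⁻¹' s (σ.symm i) := by
    ext ω
    simp only [Set.mem_preimage, Set.mem_pi, Set.mem_univ, forall_true_left,
      Set.mem_iInter, Finset.mem_univ]
    constructor
    · intro h i
      simpa using h (σ.symm i)
    · intro h i
      simpa using h (σ i)
  rw [hpre, hindep.measure_inter_preimage_eq_mul Finset.univ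
    (sets := fun i => s (σ.symm i)) (fun i _ => hs (σ.symm i))]
  have heach : ∀ i : Fin n, ℙ (Z i ⁻¹' s (σ.symm i)) = (Measure.map (Z j0) ℙ) (s (σ.symm i)) := by
    intro i
    rw [← (hident i j0).map_eq, Measure.map_apply (hmeas i) (hs (σ.symm i))]
  simp_rw [heach]
  exact Equiv.prod_comp σ.symm (fun i => (Measure.map (Z j0) ℙ) (s i))

open Finset in
/-- Upper coverage bound of the split conformal predictor under almost surely distinct
scores. Let `Z₁, …, Z_{m+1}` be i.i.d. real random variables with `P(Zᵢ = Zⱼ) = 0` for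
`i ≠ j` (`Z i.castSucc` for `i : Fin m` are the calibration scores and `Z (Fin.last m)` is
the test score), let `1/(m+1) ≤ α < 1`, let `k = ⌈(m+1)(1−α)⌉` (so `1 ≤ k ≤ m`), and let
`q̂ ω` be the `k`-th smallest of the calibration scores. Then
`P(Z_{m+1} ≤ q̂) ≤ 1 − α + 1/(m+1)`. -/
theorem conformal_coverage_upper_bound {Ω : Type*} [MeasureSpace Ω]
    [IsProbabilityMeasure (ℙ : Measure Ω)]
    (m : ℕ) (hm : 1 ≤ m) (Z : Fin (m + 1) → Ω → ℝ)
    (hmeas : ∀ i, Measurable (Z i))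
    (hindep : iIndepFun Z ℙ)
    (hident : ∀ i j, IdentDistrib (Z i) (Z j) ℙ ℙ)
    (hdistinct : ∀ i j, i ≠ j → ℙ {ω | Z i ω = Z j ω} = 0)
    (α : ℝ) (hα : 1 / ((m : ℝ) + 1) ≤ α) (hα' : α < 1) :
    ℙ {ω | Z (Fin.last m) ω ≤
        ((List.ofFn fun i : Fin m => Z i.castSucc ω).insertionSort (· ≤ ·)).getD
          ((⌈((m : ℝ) + 1) * (1 - α)⌉).toNat - 1) 0} ≤
      ENNReal.ofReal (1 - α + 1 / ((m : ℝ) + 1)) := by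
  have hm1 : (0 : ℝ) < (m : ℝ) + 1 := by positivity
  set y : ℝ := ((m : ℝ) + 1) * (1 - α) with hy
  have hy0 : 0 < y := by nlinarith
  set k : ℕ := (⌈y⌉).toNat with hkdef
  have hceil1 : (1 : ℤ) ≤ ⌈y⌉ := Int.ceil_pos.mpr hy0
  have hk1 : 1 ≤ k := by omega
  have hym : y ≤ (m : ℝ) := by
    have h1 : 1 - α ≤ 1 - 1 / ((m : ℝ) + 1) := by linarith
    calc y ≤ ((m : ℝ) + 1) * (1 - 1 / ((m : ℝ) + 1)) := by nlinarith
    _ = (m : ℝ) := by field_simp; ring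
  have hkm : k ≤ m := by
    have : ⌈y⌉ ≤ (m : ℤ) := Int.ceil_le.mpr (by exact_mod_cast hym)
    omega
  have hkreal : (k : ℝ) ≤ y + 1 := by
    have h1 : ((⌈y⌉ : ℤ) : ℝ) < y + 1 := Int.ceil_lt_add_one y
    have h2 : ((k : ℤ) : ℝ) = ((⌈y⌉ : ℤ) : ℝ) := by
      rw [hkdef, Int.toNat_of_nonneg (by omega)]
    push_cast at h2 ⊢
    linarith
  -- rank functions and basic sets
  set R : Fin (m + 1) → Ω → ℕ :=
    fun j ω => (univ.filter fun i => Z i ω ≤ Z j ω).card with hR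
  set S : Set (Fin (m + 1) → ℝ) :=
    {f | (univ.filter fun i => f i ≤ f (Fin.last m)).card ≤ k} with hS
  have hSmeas : MeasurableSet S := by
    have hN : Measurable fun f : Fin (m + 1) → ℝ =>
        (univ.filter fun i => f i ≤ f (Fin.last m)).card := by
      simp_rw [Finset.card_filter]
      exact Finset.measurable_sum _ fun i _ =>
        Measurable.ite (measurableSet_le (measurable_pi_apply i)
          (measurable_pi_apply (Fin.last m))) measurable_const measurable_const
    exact hN measurableSet_Iic
  set B : Fin (m + 1) → Set Ω := fun j => {ω | R j ω ≤ k} with hB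
  have hBmeas : ∀ j, MeasurableSet (B j) := by
    intro j
    have hvec : Measurable fun ω => (fun i => Z ((Equiv.swap j (Fin.last m)) i) ω) :=
      measurable_pi_lambda _ fun i => hmeas _
    have hBeq : B j = (fun ω => fun i => Z ((Equiv.swap j (Fin.last m)) i) ω) ⁻¹' S := by
      ext ω
      simp only [hB, hS, Set.mem_preimage, Set.mem_setOf_eq, Equiv.swap_apply_right]
      constructor
      · intro h
        refine le_trans (le_of_eq ?_) h
        exact Finset.card_bij' (fun a _ => Equiv.swap j (Fin.last m) a)
          (fun b _ => Equiv.swap j (Fin.last m) b)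
          (by intro a ha; simpa using (Finset.mem_filter.mp ha).2)
          (by intro b hb; simpa using (Finset.mem_filter.mp hb).2)
          (by intro a _; simp) (by intro b _; simp)
      · intro h
        refine le_trans (le_of_eq ?_) h
        exact Finset.card_bij' (fun a _ => Equiv.swap j (Fin.last m) a)
          (fun b _ => Equiv.swap j (Fin.last m) b)
          (by intro a ha; simpa using (Finset.mem_filter.mp ha).2)
          (by intro b hb; simpa using (Finset.mem_filter.mp hb).2)
          (by intro a _; simp) (by intro b _; simp)
    rw [hBeq]
    exact hvec hSmeas
  have hlaw : ∀ σ : Equiv.Perm (Fin (m + 1)),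
      Measure.map (fun ω i => Z (σ i) ω) ℙ
        = Measure.pi (fun _ => Measure.map (Z (Fin.last m)) ℙ) :=
    fun σ => iid_map_pi (m + 1) Z hmeas hindep hident (Fin.last m) σ
  have hp : ∀ j, ℙ (B j) = ℙ (B (Fin.last m)) := by
    intro j
    set σ := Equiv.swap j (Fin.last m) with hσ
    have hvecσ : Measurable fun ω => (fun i => Z (σ i) ω) :=
      measurable_pi_lambda _ fun i => hmeas _
    have hvec : Measurable fun ω => (fun i => Z i ω) :=
      measurable_pi_lambda _ fun i => hmeas _
    have hBeq : B j = (fun ω => fun i => Z (σ i) ω) ⁻¹' S := by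
      ext ω
      simp only [hB, hS, Set.mem_preimage, Set.mem_setOf_eq, Equiv.swap_apply_right, hσ]
      constructor <;> intro h <;> refine le_trans (le_of_eq ?_) h <;>
        exact Finset.card_bij' (fun a _ => Equiv.swap j (Fin.last m) a)
          (fun b _ => Equiv.swap j (Fin.last m) b)
          (by intro a ha; simpa using (Finset.mem_filter.mp ha).2)
          (by intro b hb; simpa using (Finset.mem_filter.mp hb).2)
          (by intro a _; simp) (by intro b _; simp)
    have hBlast : B (Fin.last m) = (fun ω => fun i => Z i ω) ⁻¹' S := by
      ext ω
      simp [hB, hS, hR]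
    rw [hBeq, hBlast, ← Measure.map_apply hvecσ hSmeas, ← Measure.map_apply hvec hSmeas,
      hlaw σ]
    have := hlaw (Equiv.refl (Fin (m + 1)))
    rw [← this]
    rfl
  set D : Set Ω := {ω | ∀ i j : Fin (m + 1), i ≠ j → Z i ω ≠ Z j ω} with hD
  have hDnull : ℙ Dᶜ = 0 := by
    have hsub : Dᶜ ⊆ ⋃ i : Fin (m + 1), ⋃ j : Fin (m + 1), ⋃ _ : i ≠ j,
        {ω | Z i ω = Z j ω} := by
      intro ω hω
      simp only [hD, Set.mem_compl_iff, Set.mem_setOf_eq, not_forall] at hω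
      obtain ⟨i, j, hij, hval⟩ := hω
      simp only [Set.mem_iUnion]
      exact ⟨i, j, hij, not_not.mp hval⟩
    refine le_antisymm (le_trans (measure_mono hsub) ?_) zero_le
    rw [show (0 : ENNReal) = 0 from rfl]
    refine le_of_eq (measure_iUnion_null fun i => measure_iUnion_null fun j =>
      measure_iUnion_null fun hij => hdistinct i j hij)
  have hcardD : ∀ ω ∈ D, ((univ.filter fun j => R j ω ≤ k).card : ℕ) ≤ k := by
    intro ω hω
    have hmono : ∀ j1 j2 : Fin (m + 1), Z j1 ω < Z j2 ω → R j1 ω < R j2 ω := by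
      intro j1 j2 hlt
      refine Finset.card_lt_card ?_
      rw [Finset.ssubset_iff_of_subset]
      · exact ⟨j2, by simp, by simp; linarith⟩
      · intro i hi
        simp only [Finset.mem_filter, Finset.mem_univ, true_and] at hi ⊢
        linarith
    have hinj : Set.InjOn (fun j => R j ω) ↑(univ.filter fun j => R j ω ≤ k) := by
      intro j1 _ j2 _ heq
      by_contra hne
      rcases lt_or_gt_of_ne (hω j1 j2 hne) with h | h
      · exact absurd heq (Nat.ne_of_lt (hmono _ _ h))
      · exact absurd heq.symm (Nat.ne_of_lt (hmono _ _ h))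
    have hmaps : ∀ j ∈ univ.filter fun j => R j ω ≤ k,
        R j ω ∈ Finset.Icc 1 k := by
      intro j hj
      rw [Finset.mem_filter] at hj
      refine Finset.mem_Icc.mpr ⟨?_, hj.2⟩
      refine Finset.card_pos.mpr ⟨j, ?_⟩
      simp
    calc (univ.filter fun j => R j ω ≤ k).card ≤ (Finset.Icc 1 k).card :=
        Finset.card_le_card_of_injOn _ hmaps hinj
    _ = k := by rw [Nat.card_Icc]; omega
  have hDae : ∀ᵐ ω ∂(ℙ : Measure Ω), ω ∈ D := by
    rw [ae_iff]
    exact hDnull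
  have hindsum : ∀ᵐ ω ∂(ℙ : Measure Ω),
      ∑ j : Fin (m + 1), (B j).indicator (fun _ => (1 : ENNReal)) ω ≤ (k : ENNReal) := by
    refine hDae.mono fun ω hω => ?_
    have h1 : ∑ j : Fin (m + 1), (B j).indicator (fun _ => (1 : ENNReal)) ω
        = ((univ.filter fun j => R j ω ≤ k).card : ENNReal) := by
      simp only [Set.indicator_apply, hB, Set.mem_setOf_eq]
      rw [Finset.sum_boole]
    rw [h1]
    exact_mod_cast Nat.cast_le.mpr (hcardD ω hω)
  have hsum : ∑ j : Fin (m + 1), ℙ (B j) ≤ (k : ENNReal) := by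
    calc ∑ j : Fin (m + 1), ℙ (B j)
        = ∑ j : Fin (m + 1), ∫⁻ ω, (B j).indicator (fun _ => (1 : ENNReal)) ω ∂ℙ := by
          exact Finset.sum_congr rfl fun j _ => (lintegral_indicator_one (hBmeas j)).symm
    _ = ∫⁻ ω, ∑ j : Fin (m + 1), (B j).indicator (fun _ => (1 : ENNReal)) ω ∂ℙ :=
          (lintegral_finset_sum _ fun j _ => measurable_const.indicator (hBmeas j)).symm
    _ ≤ ∫⁻ _, (k : ENNReal) ∂ℙ := lintegral_mono_ae hindsum
    _ = (k : ENNReal) := by simp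
  have hmul : ((m : ENNReal) + 1) * ℙ (B (Fin.last m)) ≤ (k : ENNReal) := by
    have h1 : ∑ j : Fin (m + 1), ℙ (B j) = ((m : ENNReal) + 1) * ℙ (B (Fin.last m)) := by
      rw [Finset.sum_congr rfl fun j _ => hp j, Finset.sum_const, Finset.card_univ,
        Fintype.card_fin, nsmul_eq_mul]
      push_cast
      ring
    rw [← h1]
    exact hsum
  have hfinal : ℙ (B (Fin.last m)) ≤ ENNReal.ofReal (1 - α + 1 / ((m : ℝ) + 1)) := by
    have hne0 : ((m : ENNReal) + 1) ≠ 0 := by simp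
    have hnetop : ((m : ENNReal) + 1) ≠ ⊤ := by simp
    have hdiv : ℙ (B (Fin.last m)) ≤ (k : ENNReal) / ((m : ENNReal) + 1) := by
      rw [ENNReal.le_div_iff_mul_le (Or.inl hne0) (Or.inl hnetop), mul_comm]
      exact hmul
    refine le_trans hdiv ?_
    have heq : (k : ENNReal) / ((m : ENNReal) + 1)
        = ENNReal.ofReal ((k : ℝ) / ((m : ℝ) + 1)) := by
      rw [ENNReal.ofReal_div_of_pos hm1, ENNReal.ofReal_natCast]
      congr 1
      rw [ENNReal.ofReal_add (by positivity) zero_le_one, ENNReal.ofReal_natCast,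
        ENNReal.ofReal_one]
    rw [heq]
    refine ENNReal.ofReal_le_ofReal ?_
    rw [div_le_iff₀ hm1]
    have hrhs : (1 - α + 1 / ((m : ℝ) + 1)) * ((m : ℝ) + 1) = y + 1 := by
      field_simp
      ring
    rw [hrhs]
    exact hkreal
  have hTsub : {ω | Z (Fin.last m) ω ≤
      ((List.ofFn fun i : Fin m => Z i.castSucc ω).insertionSort (· ≤ ·)).getD (k - 1) 0}
      ⊆ B (Fin.last m) ∪ Dᶜ := by
    intro ω hω
    by_cases hωD : ω ∈ D
    · left
      show R (Fin.last m) ω ≤ k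
      have hne : ∀ i : Fin m, Z i.castSucc ω ≠ Z (Fin.last m) ω :=
        fun i => hωD i.castSucc (Fin.last m) (Fin.castSucc_lt_last i).ne
      have hcount := sorted_count_le m (fun i => Z i.castSucc ω) (Z (Fin.last m) ω)
        hne k hk1 hkm hω
      beta_reduce at hcount
      have hRval : R (Fin.last m) ω
          = (univ.filter fun i : Fin m => Z i.castSucc ω ≤ Z (Fin.last m) ω).card + 1 := by
        simp only [hR, Finset.card_filter]
        rw [Fin.sum_univ_castSucc]
        simp
      omega
    · right
      exact hωD
  calc ℙ {ω | Z (Fin.last m) ω ≤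
      ((List.ofFn fun i : Fin m => Z i.castSucc ω).insertionSort (· ≤ ·)).getD (k - 1) 0}
      ≤ ℙ (B (Fin.last m) ∪ Dᶜ) := measure_mono hTsub
    _ ≤ ℙ (B (Fin.last m)) + ℙ Dᶜ := measure_union_le _ _
    _ = ℙ (B (Fin.last m)) := by rw [hDnull, add_zero]
    _ ≤ ENNReal.ofReal (1 - α + 1 / ((m : ℝ) + 1)) := hfinal
end
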